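/- Let 0<ε₁<ε₂<ε₃ and let ζ = (ζ₁,0,ζ₃) with ζ₁² = ε₃(ε₁−ε₂)/(ε₁−ε₃) and ζ₃² = ε₁(ε₃−ε₂)/(ε₃−ε₁) be a singular point of the Fresnel surface {𝒩 = 0}. Then the Hessian matrix D²𝒩(ζ) has block form diag-plus-corner structure with entries D₂₂ = 2(ε₁−ε₂)(ε₂−ε₃)/(ε₁ε₂ε₃) > 0, D₁₁ = −8(ε₂−ε₁)/(ε₂(ε₃−ε₁)) < 0, D₃₃ = −8(ε₂−ε₃)/(ε₂(ε₁−ε₃)) > 0, D₁₃ = −4(ε₁+ε₃)√((ε₂−ε₁)(ε₃−ε₂))/(ε₂√(ε₁ε₃)(ε₃−ε₁)), D₁₂ = D₂₃ = 0, and D₁₁D₃₃ − D₁₃² = −16(ε₂−ε₁)(ε₃−ε₂)/(ε₁ε₂²ε₃) < 0. Consequently D²𝒩(ζ) has two positive and one negative eigenvalue. -/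

import Mathlib

open Polynomial

/-- The defining polynomial of the Fresnel surface (with `μ₁=μ₂=μ₃=ω=1`), i.e.
`p(η) = -(1 - q₀*(η) + q₁*(η))`, whose zero set is `{𝒩 = 0}`. -/
noncomputable def fresnelP (ε₁ ε₂ ε₃ : ℝ) (η : Fin 3 → ℝ) : ℝ :=
  -(1 - ((η 0) ^ 2 * (1 / ε₂ + 1 / ε₃) + (η 1) ^ 2 * (1 / ε₁ + 1 / ε₃)
      + (η 2) ^ 2 * (1 / ε₁ + 1 / ε₂))
    + (ε₁ * (η 0) ^ 2 + ε₂ * (η 1) ^ 2 + ε₃ * (η 2) ^ 2)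
      * ((η 0) ^ 2 + (η 1) ^ 2 + (η 2) ^ 2) / (ε₁ * ε₂ * ε₃))

/-- The entry `D i j` of the Hessian of the Fresnel polynomial. -/
noncomputable def fresnelHess (ε₁ ε₂ ε₃ : ℝ) (ζ : Fin 3 → ℝ) (i j : Fin 3) : ℝ :=
  fderiv ℝ (fun x => fderiv ℝ (fresnelP ε₁ ε₂ ε₃) x (Pi.single j 1)) ζ (Pi.single i 1)

/-!
The Fresnel polynomial is `q₀* - q₁* - 1`, where `q₀* = ∑ aₖ ηₖ²` is a diagonal quadratic form and
`q₁*` is the product of two more, `∑ εₖ ηₖ²` and `|η|²`, divided by `ε₁ε₂ε₃`. Hence its Hessian is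
`Dᵢⱼ = 2 δᵢⱼ (aⱼ - (εⱼ |x|² + ∑ εₖ xₖ²) / (ε₁ε₂ε₃)) - 4 xᵢ xⱼ (εᵢ + εⱼ) / (ε₁ε₂ε₃)`.
At the singular point `|ζ|² = ε₂` and `∑ εₖ ζₖ² = ε₁ε₃`, which yields the entries. Since the middle
coordinate of `ζ` vanishes, the middle row and column of the Hessian are zero off the diagonal, so
the characteristic polynomial is `X - D₂₂` times that of the corner block on the first and third
coordinates; the negative determinant of that block makes its two eigenvalues of opposite signs.
-/

section DiagQuad

variable {ι : Type*} [Fintype ι]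

def diagQuad (w x : ι → ℝ) : ℝ := ∑ k, w k * x k ^ 2

theorem hasFDerivAt_diagQuad (w x : ι → ℝ) :
    HasFDerivAt (diagQuad w)
      (∑ k, (2 * w k * x k) • (ContinuousLinearMap.proj k : (ι → ℝ) →L[ℝ] ℝ)) x := by
  refine (HasFDerivAt.fun_sum (u := Finset.univ) fun k _ =>
    ((hasFDerivAt_apply (𝕜 := ℝ) k x).pow 2).const_mul (w k)).congr_fderiv ?_
  refine Finset.sum_congr rfl fun k _ => ?_
  simp only [smul_smul, nsmul_eq_mul]
  ring_nf

end DiagQuad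

section Fresnel

variable (ε₁ ε₂ ε₃ : ℝ)

def fresnelEps : Fin 3 → ℝ := ![ε₁, ε₂, ε₃]

noncomputable def fresnelCoeff : Fin 3 → ℝ :=
  ![1 / ε₂ + 1 / ε₃, 1 / ε₁ + 1 / ε₃, 1 / ε₁ + 1 / ε₂]

theorem fresnelP_eq_diagQuad :
    fresnelP ε₁ ε₂ ε₃ = fun x => diagQuad (fresnelCoeff ε₁ ε₂ ε₃) x
      - (ε₁ * ε₂ * ε₃)⁻¹ * (diagQuad (fresnelEps ε₁ ε₂ ε₃) x * diagQuad 1 x) - 1 := by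
  ext x
  simp only [fresnelP, diagQuad, fresnelCoeff, fresnelEps, Fin.sum_univ_three, Pi.one_apply,
    Matrix.cons_val_zero, Matrix.cons_val_one, Matrix.cons_val]
  ring

noncomputable def fresnelGrad (j : Fin 3) (x : Fin 3 → ℝ) : ℝ :=
  2 * x j * (fresnelCoeff ε₁ ε₂ ε₃ j - (ε₁ * ε₂ * ε₃)⁻¹ *
    (fresnelEps ε₁ ε₂ ε₃ j * diagQuad 1 x + diagQuad (fresnelEps ε₁ ε₂ ε₃) x))

theorem fderiv_fresnelP_single (x : Fin 3 → ℝ) (j : Fin 3) :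
    fderiv ℝ (fresnelP ε₁ ε₂ ε₃) x (Pi.single j 1) = fresnelGrad ε₁ ε₂ ε₃ j x := by
  rw [fresnelP_eq_diagQuad, (((hasFDerivAt_diagQuad _ x).fun_sub
    (((hasFDerivAt_diagQuad _ x).fun_mul (hasFDerivAt_diagQuad 1 x)).const_mul _)).sub_const
      1).fderiv]
  simp only [sub_apply, add_apply, smul_apply, sum_apply, ContinuousLinearMap.proj_apply,
    Pi.single_apply, smul_eq_mul, mul_ite, mul_one, mul_zero, Finset.sum_ite_eq', Finset.mem_univ,
    if_true, fresnelGrad, Pi.one_apply]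
  ring

theorem fresnelHess_apply (x : Fin 3 → ℝ) (i j : Fin 3) :
    fresnelHess ε₁ ε₂ ε₃ x i j =
      2 * (if i = j then fresnelCoeff ε₁ ε₂ ε₃ j - (ε₁ * ε₂ * ε₃)⁻¹ *
        (fresnelEps ε₁ ε₂ ε₃ j * diagQuad 1 x + diagQuad (fresnelEps ε₁ ε₂ ε₃) x) else 0)
      - 4 * (ε₁ * ε₂ * ε₃)⁻¹ * x i * x j * (fresnelEps ε₁ ε₂ ε₃ i + fresnelEps ε₁ ε₂ ε₃ j) := by
  have hgrad : (fun x => fderiv ℝ (fresnelP ε₁ ε₂ ε₃) x (Pi.single j 1)) = fresnelGrad ε₁ ε₂ ε₃ j :=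
    funext fun x => fderiv_fresnelP_single ε₁ ε₂ ε₃ x j
  have h : HasFDerivAt (fresnelGrad ε₁ ε₂ ε₃ j) _ x :=
    ((hasFDerivAt_apply (𝕜 := ℝ) j x).const_mul 2).fun_mul ((hasFDerivAt_const _ x).sub
      ((((hasFDerivAt_diagQuad 1 x).const_mul (fresnelEps ε₁ ε₂ ε₃ j)).fun_add
        (hasFDerivAt_diagQuad _ x)).const_mul _))
  rw [fresnelHess, hgrad, h.fderiv]
  simp only [add_apply, sub_apply, zero_apply, smul_apply, sum_apply,
    ContinuousLinearMap.proj_apply, Pi.single_apply, smul_eq_mul, mul_ite, mul_one, mul_zero,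
    Finset.sum_ite_eq', Finset.mem_univ, if_true, Pi.one_apply, eq_comm (a := j)]
  split_ifs <;> ring

end Fresnel

theorem Matrix.charpoly_fin_three_of_middle_decoupled {R : Type*} [CommRing R]
    (A : Matrix (Fin 3) (Fin 3) R) (h01 : A 0 1 = 0) (h10 : A 1 0 = 0) (h12 : A 1 2 = 0)
    (h21 : A 2 1 = 0) :
    A.charpoly = (X - C (A 1 1)) *
      (X ^ 2 - C (A 0 0 + A 2 2) * X + C (A 0 0 * A 2 2 - A 0 2 * A 2 0)) := by
  rw [Matrix.charpoly, Matrix.det_fin_three]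
  simp only [Matrix.charmatrix_apply_eq, Matrix.charmatrix_apply_ne, ne_eq, Fin.reduceEq,
    not_false_eq_true, h01, h10, h12, h21, map_zero, neg_zero, map_add, map_sub, map_mul]
  ring

theorem exists_pos_neg_roots_of_const_neg {T Δ : ℝ} (hΔ : Δ < 0) :
    ∃ a b : ℝ, 0 < a ∧ b < 0 ∧ X ^ 2 - C T * X + C Δ = (X - C a) * (X - C b) := by
  set s := √(T ^ 2 - 4 * Δ)
  have hs : s ^ 2 = T ^ 2 - 4 * Δ := Real.sq_sqrt (by nlinarith)
  have hs₀ : 0 ≤ s := Real.sqrt_nonneg _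
  refine ⟨(T + s) / 2, (T - s) / 2, by nlinarith, by nlinarith, ?_⟩
  have hsum : C T = C ((T + s) / 2) + C ((T - s) / 2) := by rw [← C_add]; ring_nf
  have hprod : C Δ = C ((T + s) / 2) * C ((T - s) / 2) := by
    rw [← C_mul]
    congr 1
    linear_combination (1 / 4 : ℝ) * hs
  rw [hsum, hprod]
  ring

theorem Matrix.exists_charpoly_eq_of_signature_two_one (A : Matrix (Fin 3) (Fin 3) ℝ)
    (h01 : A 0 1 = 0) (h10 : A 1 0 = 0) (h12 : A 1 2 = 0) (h21 : A 2 1 = 0) (h11 : 0 < A 1 1)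
    (hdet : A 0 0 * A 2 2 - A 0 2 * A 2 0 < 0) :
    ∃ l₁ l₂ l₃ : ℝ, 0 < l₁ ∧ 0 < l₂ ∧ l₃ < 0 ∧
      A.charpoly = (X - C l₁) * (X - C l₂) * (X - C l₃) := by
  obtain ⟨a, b, ha, hb, hfactor⟩ :=
    exists_pos_neg_roots_of_const_neg (T := A 0 0 + A 2 2) hdet
  refine ⟨A 1 1, a, b, h11, ha, hb, ?_⟩
  rw [A.charpoly_fin_three_of_middle_decoupled h01 h10 h12 h21, hfactor]
  ring

section SingularPoint

variable {ε₁ ε₂ ε₃ : ℝ}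

theorem fresnelHess_comm (x : Fin 3 → ℝ) (i j : Fin 3) :
    fresnelHess ε₁ ε₂ ε₃ x i j = fresnelHess ε₁ ε₂ ε₃ x j i := by
  simp only [fresnelHess_apply, eq_comm (a := i)]
  split_ifs with h
  · subst h; ring
  · ring

theorem fresnelHess_eq_zero_of_ne {x : Fin 3 → ℝ} {i j : Fin 3} (hij : i ≠ j) (hj : x j = 0) :
    fresnelHess ε₁ ε₂ ε₃ x i j = 0 := by
  simp [fresnelHess_apply, hij, hj]

theorem fresnelHess_zero_two (x : Fin 3 → ℝ) :
    fresnelHess ε₁ ε₂ ε₃ x 0 2 = -4 * (ε₁ + ε₃) / (ε₁ * ε₂ * ε₃) * (x 0 * x 2) := by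
  simp only [fresnelHess_apply, fresnelEps, Fin.reduceEq, ↓reduceIte, Matrix.cons_val_zero,
    Matrix.cons_val]
  ring

variable {ζ : Fin 3 → ℝ}

theorem diagQuad_one_of_singular (h₁₃ : ε₁ ≠ ε₃) (hζ₂ : ζ 1 = 0)
    (hζ₁ : ζ 0 ^ 2 = ε₃ * (ε₁ - ε₂) / (ε₁ - ε₃)) (hζ₃ : ζ 2 ^ 2 = ε₁ * (ε₃ - ε₂) / (ε₃ - ε₁)) :
    diagQuad 1 ζ = ε₂ := by
  have : ε₁ - ε₃ ≠ 0 := sub_ne_zero.2 h₁₃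
  have : ε₃ - ε₁ ≠ 0 := sub_ne_zero.2 h₁₃.symm
  simp only [diagQuad, Fin.sum_univ_three, Pi.one_apply, one_mul, hζ₁, hζ₂, hζ₃]
  field_simp
  ring

theorem diagQuad_fresnelEps_of_singular (h₁₃ : ε₁ ≠ ε₃) (hζ₂ : ζ 1 = 0)
    (hζ₁ : ζ 0 ^ 2 = ε₃ * (ε₁ - ε₂) / (ε₁ - ε₃)) (hζ₃ : ζ 2 ^ 2 = ε₁ * (ε₃ - ε₂) / (ε₃ - ε₁)) :
    diagQuad (fresnelEps ε₁ ε₂ ε₃) ζ = ε₁ * ε₃ := by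
  have : ε₁ - ε₃ ≠ 0 := sub_ne_zero.2 h₁₃
  have : ε₃ - ε₁ ≠ 0 := sub_ne_zero.2 h₁₃.symm
  simp only [diagQuad, Fin.sum_univ_three, fresnelEps, Matrix.cons_val_zero, Matrix.cons_val_one,
    Matrix.cons_val, hζ₁, hζ₂, hζ₃]
  field_simp
  ring

theorem fresnelHess_one_one_of_singular (h₁ : ε₁ ≠ 0) (h₂ : ε₂ ≠ 0) (h₃ : ε₃ ≠ 0)
    (h₁₃ : ε₁ ≠ ε₃) (hζ₂ : ζ 1 = 0) (hζ₁ : ζ 0 ^ 2 = ε₃ * (ε₁ - ε₂) / (ε₁ - ε₃))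
    (hζ₃ : ζ 2 ^ 2 = ε₁ * (ε₃ - ε₂) / (ε₃ - ε₁)) :
    fresnelHess ε₁ ε₂ ε₃ ζ 1 1 = 2 * (ε₁ - ε₂) * (ε₂ - ε₃) / (ε₁ * ε₂ * ε₃) := by
  rw [fresnelHess_apply, diagQuad_one_of_singular h₁₃ hζ₂ hζ₁ hζ₃,
    diagQuad_fresnelEps_of_singular h₁₃ hζ₂ hζ₁ hζ₃]
  simp only [fresnelEps, fresnelCoeff, Matrix.cons_val_zero, Matrix.cons_val_one, ↓reduceIte,
    hζ₂]
  field_simp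
  ring

theorem fresnelHess_zero_zero_of_singular (h₁ : ε₁ ≠ 0) (h₂ : ε₂ ≠ 0) (h₃ : ε₃ ≠ 0)
    (h₁₃ : ε₁ ≠ ε₃) (hζ₂ : ζ 1 = 0) (hζ₁ : ζ 0 ^ 2 = ε₃ * (ε₁ - ε₂) / (ε₁ - ε₃))
    (hζ₃ : ζ 2 ^ 2 = ε₁ * (ε₃ - ε₂) / (ε₃ - ε₁)) :
    fresnelHess ε₁ ε₂ ε₃ ζ 0 0 = -8 * (ε₂ - ε₁) / (ε₂ * (ε₃ - ε₁)) := by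
  have : ε₁ - ε₃ ≠ 0 := sub_ne_zero.2 h₁₃
  have : ε₃ - ε₁ ≠ 0 := sub_ne_zero.2 h₁₃.symm
  rw [fresnelHess_apply, diagQuad_one_of_singular h₁₃ hζ₂ hζ₁ hζ₃,
    diagQuad_fresnelEps_of_singular h₁₃ hζ₂ hζ₁ hζ₃]
  have hζ₁' : ζ 0 ^ 2 * (ε₁ - ε₃) = ε₃ * (ε₁ - ε₂) := by rw [hζ₁]; field_simp
  simp only [fresnelEps, fresnelCoeff, Matrix.cons_val_zero, ↓reduceIte]
  field_simp
  linear_combination 8 * hζ₁'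

theorem fresnelHess_two_two_of_singular (h₁ : ε₁ ≠ 0) (h₂ : ε₂ ≠ 0) (h₃ : ε₃ ≠ 0)
    (h₁₃ : ε₁ ≠ ε₃) (hζ₂ : ζ 1 = 0) (hζ₁ : ζ 0 ^ 2 = ε₃ * (ε₁ - ε₂) / (ε₁ - ε₃))
    (hζ₃ : ζ 2 ^ 2 = ε₁ * (ε₃ - ε₂) / (ε₃ - ε₁)) :
    fresnelHess ε₁ ε₂ ε₃ ζ 2 2 = -8 * (ε₂ - ε₃) / (ε₂ * (ε₁ - ε₃)) := by
  have : ε₁ - ε₃ ≠ 0 := sub_ne_zero.2 h₁₃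
  have : ε₃ - ε₁ ≠ 0 := sub_ne_zero.2 h₁₃.symm
  rw [fresnelHess_apply, diagQuad_one_of_singular h₁₃ hζ₂ hζ₁ hζ₃,
    diagQuad_fresnelEps_of_singular h₁₃ hζ₂ hζ₁ hζ₃]
  have hζ₃' : ζ 2 ^ 2 * (ε₃ - ε₁) = ε₁ * (ε₃ - ε₂) := by rw [hζ₃]; field_simp
  simp only [fresnelEps, fresnelCoeff, Matrix.cons_val, ↓reduceIte]
  field_simp
  linear_combination 8 * hζ₃'

theorem mul_eq_sqrt_of_singular (h₀ : 0 < ε₁) (h₁₂ : ε₁ < ε₂) (h₂₃ : ε₂ < ε₃)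
    (hζ₁pos : 0 < ζ 0) (hζ₃pos : 0 < ζ 2) (hζ₁ : ζ 0 ^ 2 = ε₃ * (ε₁ - ε₂) / (ε₁ - ε₃))
    (hζ₃ : ζ 2 ^ 2 = ε₁ * (ε₃ - ε₂) / (ε₃ - ε₁)) :
    ζ 0 * ζ 2 = √(ε₁ * ε₃) * √((ε₂ - ε₁) * (ε₃ - ε₂)) / (ε₃ - ε₁) := by
  have h₃₁ : 0 < ε₃ - ε₁ := by linarith
  have : ε₁ - ε₃ ≠ 0 := by linarith
  have hsq : (ζ 0 * ζ 2) ^ 2 = ε₁ * ε₃ * ((ε₂ - ε₁) * (ε₃ - ε₂)) / (ε₃ - ε₁) ^ 2 := by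
    rw [mul_pow, hζ₁, hζ₃]
    field_simp
    ring
  rw [← Real.sqrt_sq (mul_pos hζ₁pos hζ₃pos).le, hsq, Real.sqrt_div' _ (by positivity),
    Real.sqrt_mul (by nlinarith), Real.sqrt_sq h₃₁.le]

theorem fresnelHess_zero_two_of_singular (h₀ : 0 < ε₁) (h₁₂ : ε₁ < ε₂) (h₂₃ : ε₂ < ε₃)
    (hζ₁pos : 0 < ζ 0) (hζ₃pos : 0 < ζ 2) (hζ₁ : ζ 0 ^ 2 = ε₃ * (ε₁ - ε₂) / (ε₁ - ε₃))
    (hζ₃ : ζ 2 ^ 2 = ε₁ * (ε₃ - ε₂) / (ε₃ - ε₁)) :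
    fresnelHess ε₁ ε₂ ε₃ ζ 0 2 = -4 * (ε₁ + ε₃) * √((ε₂ - ε₁) * (ε₃ - ε₂))
      / (ε₂ * √(ε₁ * ε₃) * (ε₃ - ε₁)) := by
  have h₃₁ : ε₃ - ε₁ ≠ 0 := by linarith
  have h₁₃ : 0 < ε₁ * ε₃ := by nlinarith
  have hs : √(ε₁ * ε₃) ^ 2 = ε₁ * ε₃ := Real.sq_sqrt h₁₃.le
  have : √(ε₁ * ε₃) ≠ 0 := (Real.sqrt_pos.2 h₁₃).ne'
  have : ε₁ ≠ 0 := h₀.ne'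
  have : ε₂ ≠ 0 := by linarith
  have : ε₃ ≠ 0 := by linarith
  rw [fresnelHess_zero_two, mul_eq_sqrt_of_singular h₀ h₁₂ h₂₃ hζ₁pos hζ₃pos hζ₁ hζ₃]
  field_simp
  linear_combination -(ε₁ + ε₃) * √((ε₂ - ε₁) * (ε₃ - ε₂)) * hs

theorem fresnelHess_corner_det_of_singular (h₁ : ε₁ ≠ 0) (h₂ : ε₂ ≠ 0) (h₃ : ε₃ ≠ 0)
    (h₁₃ : ε₁ ≠ ε₃) (hζ₂ : ζ 1 = 0) (hζ₁ : ζ 0 ^ 2 = ε₃ * (ε₁ - ε₂) / (ε₁ - ε₃))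
    (hζ₃ : ζ 2 ^ 2 = ε₁ * (ε₃ - ε₂) / (ε₃ - ε₁)) :
    fresnelHess ε₁ ε₂ ε₃ ζ 0 0 * fresnelHess ε₁ ε₂ ε₃ ζ 2 2 - fresnelHess ε₁ ε₂ ε₃ ζ 0 2 ^ 2
      = -16 * (ε₂ - ε₁) * (ε₃ - ε₂) / (ε₁ * ε₂ ^ 2 * ε₃) := by
  have : ε₁ - ε₃ ≠ 0 := sub_ne_zero.2 h₁₃
  have : ε₃ - ε₁ ≠ 0 := sub_ne_zero.2 h₁₃.symm
  rw [fresnelHess_zero_zero_of_singular h₁ h₂ h₃ h₁₃ hζ₂ hζ₁ hζ₃,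
    fresnelHess_two_two_of_singular h₁ h₂ h₃ h₁₃ hζ₂ hζ₁ hζ₃, fresnelHess_zero_two,
    mul_pow, mul_pow, hζ₁, hζ₃]
  field_simp
  ring

end SingularPoint

/-- At a singular point `ζ = (ζ₁,0,ζ₃)` of the Fresnel surface the Hessian has the stated
entries, `D₁₁D₃₃ - D₁₃² < 0`, and consequently two positive and one negative eigenvalue. -/
theorem stmt12 (ε₁ ε₂ ε₃ : ℝ) (h₀ : 0 < ε₁) (h₁₂ : ε₁ < ε₂) (h₂₃ : ε₂ < ε₃)
    (ζ : Fin 3 → ℝ) (hζ₁pos : 0 < ζ 0) (hζ₃pos : 0 < ζ 2) (hζ₂ : ζ 1 = 0)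
    (hζ₁ : (ζ 0) ^ 2 = ε₃ * (ε₁ - ε₂) / (ε₁ - ε₃))
    (hζ₃ : (ζ 2) ^ 2 = ε₁ * (ε₃ - ε₂) / (ε₃ - ε₁)) :
    let D := fresnelHess ε₁ ε₂ ε₃ ζ
    (D 1 1 = 2 * (ε₁ - ε₂) * (ε₂ - ε₃) / (ε₁ * ε₂ * ε₃) ∧ 0 < D 1 1) ∧
    (D 0 0 = -8 * (ε₂ - ε₁) / (ε₂ * (ε₃ - ε₁)) ∧ D 0 0 < 0) ∧
    D 2 2 = -8 * (ε₂ - ε₃) / (ε₂ * (ε₁ - ε₃)) ∧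
    D 0 2 = -4 * (ε₁ + ε₃) * Real.sqrt ((ε₂ - ε₁) * (ε₃ - ε₂))
      / (ε₂ * Real.sqrt (ε₁ * ε₃) * (ε₃ - ε₁)) ∧
    (D 0 1 = 0 ∧ D 1 2 = 0) ∧
    (D 0 0 * D 2 2 - (D 0 2) ^ 2 = -16 * (ε₂ - ε₁) * (ε₃ - ε₂) / (ε₁ * ε₂ ^ 2 * ε₃)
      ∧ D 0 0 * D 2 2 - (D 0 2) ^ 2 < 0) ∧
    (∃ l₁ l₂ l₃ : ℝ, 0 < l₁ ∧ 0 < l₂ ∧ l₃ < 0 ∧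
      (Matrix.of D).charpoly = (X - C l₁) * (X - C l₂) * (X - C l₃)) := by
  intro D
  have h₂ : 0 < ε₂ := h₀.trans h₁₂
  have h₃ : 0 < ε₃ := h₂.trans h₂₃
  have h₁₃ : ε₁ ≠ ε₃ := (h₁₂.trans h₂₃).ne
  have h11 : D 1 1 = _ := fresnelHess_one_one_of_singular h₀.ne' h₂.ne' h₃.ne' h₁₃ hζ₂ hζ₁ hζ₃
  have h00 : D 0 0 = _ := fresnelHess_zero_zero_of_singular h₀.ne' h₂.ne' h₃.ne' h₁₃ hζ₂ hζ₁ hζ₃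
  have hdet : D 0 0 * D 2 2 - D 0 2 ^ 2 = _ :=
    fresnelHess_corner_det_of_singular h₀.ne' h₂.ne' h₃.ne' h₁₃ hζ₂ hζ₁ hζ₃
  have h01 : D 0 1 = 0 := fresnelHess_eq_zero_of_ne (by decide) hζ₂
  have h21 : D 2 1 = 0 := fresnelHess_eq_zero_of_ne (by decide) hζ₂
  have h12 : D 1 2 = 0 := (fresnelHess_comm ζ 1 2).trans h21
  have h11_pos : 0 < D 1 1 := h11 ▸ div_pos (by nlinarith) (by positivity)
  have hdet_neg : D 0 0 * D 2 2 - D 0 2 ^ 2 < 0 :=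
    hdet ▸ div_neg_of_neg_of_pos (by nlinarith) (by positivity)
  refine ⟨⟨h11, h11_pos⟩, ⟨h00, h00 ▸ div_neg_of_neg_of_pos (by linarith) (by nlinarith)⟩,
    fresnelHess_two_two_of_singular h₀.ne' h₂.ne' h₃.ne' h₁₃ hζ₂ hζ₁ hζ₃,
    fresnelHess_zero_two_of_singular h₀ h₁₂ h₂₃ hζ₁pos hζ₃pos hζ₁ hζ₃, ⟨h01, h12⟩,
    ⟨hdet, hdet_neg⟩, ?_⟩
  refine Matrix.exists_charpoly_eq_of_signature_two_one _ h01
    ((fresnelHess_comm ζ 1 0).trans h01) h12 h21 h11_pos ?_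
  have h20 : D 2 0 = D 0 2 := fresnelHess_comm ζ 2 0
  show D 0 0 * D 2 2 - D 0 2 * D 2 0 < 0
  rwa [h20, ← pow_two]
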